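/- arXiv:math/0103004 — 6 statements merged into one kernel-verified Lean document; each statement's English description precedes it below -/
import Mathlib

section
/- Let K be a compact subset of ℝ of infinite cardinality and let n ≥ 1. Then there exists a monic real polynomial T of degree n such that for every monic real polynomial P of degree n one has ‖T‖_K ≤ ‖P‖_K; i.e., the infimum of ‖P‖_K over monic real polynomials P of degree n is attained. -/
open Polynomial

/-- The sup norm of a real polynomial on a set `K ⊆ ℝ`. -/
noncomputable def supNormOn (K : Set ℝ) (P : Polynomial ℝ) : ℝ :=
  sSup ((fun x => |P.eval x|) '' K)

namespace ChebAux

/-- The monic polynomial `X^n + ∑ c i • X^i`. -/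
noncomputable def Pc (n : ℕ) (c : Fin n → ℝ) : Polynomial ℝ :=
  X ^ n + ∑ i : Fin n, C (c i) * X ^ (i : ℕ)

lemma sum_degree_lt (n : ℕ) (hn : 1 ≤ n) (c : Fin n → ℝ) :
    (∑ i : Fin n, C (c i) * X ^ (i : ℕ) : ℝ[X]).degree < n := by
  apply lt_of_le_of_lt (degree_sum_le _ _)
  rw [Finset.sup_lt_iff (by exact_mod_cast WithBot.bot_lt_coe n)]
  intro i _
  exact lt_of_le_of_lt (degree_C_mul_X_pow_le _ _) (by exact_mod_cast i.2)

lemma Pc_monic (n : ℕ) (hn : 1 ≤ n) (c : Fin n → ℝ) : (Pc n c).Monic :=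
  monic_X_pow_add (sum_degree_lt n hn c)

lemma Pc_natDegree (n : ℕ) (hn : 1 ≤ n) (c : Fin n → ℝ) : (Pc n c).natDegree = n := by
  have h : (Pc n c).degree = n := by
    rw [Pc, degree_add_eq_left_of_degree_lt (by simpa [degree_X_pow] using sum_degree_lt n hn c),
      degree_X_pow]
  exact natDegree_eq_of_degree_eq_some h

lemma Pc_rep (n : ℕ) (P : ℝ[X]) (hP : P.Monic) (hd : P.natDegree = n) :
    P = Pc n (fun i => P.coeff i) := by
  conv_lhs => rw [hP.as_sum]
  rw [hd, Pc, ← Fin.sum_univ_eq_sum_range (fun i => C (P.coeff i) * X ^ i)]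

lemma Pc_eval (n : ℕ) (c : Fin n → ℝ) (x : ℝ) :
    (Pc n c).eval x = x ^ n + ∑ i : Fin n, c i * x ^ (i : ℕ) := by
  simp [Pc, eval_finset_sum]

lemma bddAbove_image {K : Set ℝ} (hK : IsCompact K) (P : ℝ[X]) :
    BddAbove ((fun x => |P.eval x|) '' K) :=
  (hK.image (continuous_abs.comp P.continuous)).bddAbove

lemma le_supNormOn {K : Set ℝ} (hK : IsCompact K) (P : ℝ[X]) {x : ℝ} (hx : x ∈ K) :
    |P.eval x| ≤ supNormOn K P :=
  le_csSup (bddAbove_image hK P) ⟨x, hx, rfl⟩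

lemma supNormOn_le {K : Set ℝ} (hne : K.Nonempty) {P : ℝ[X]} {B : ℝ}
    (h : ∀ x ∈ K, |P.eval x| ≤ B) : supNormOn K P ≤ B :=
  csSup_le (hne.image _) (by rintro _ ⟨x, hx, rfl⟩; exact h x hx)

lemma supNormOn_nonneg {K : Set ℝ} (hK : IsCompact K) (hne : K.Nonempty) (P : ℝ[X]) :
    0 ≤ supNormOn K P := by
  obtain ⟨x, hx⟩ := hne
  exact le_trans (abs_nonneg _) (le_supNormOn hK P hx)

end ChebAux

open ChebAux in
/-- For a compact infinite `K ⊆ ℝ` and `n ≥ 1`, there is a monic polynomial of degree `n`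
minimizing the sup norm on `K` among monic polynomials of degree `n`. -/
theorem exists_chebyshev_poly (K : Set ℝ) (hK : IsCompact K) (hKinf : K.Infinite)
    (n : ℕ) (hn : 1 ≤ n) :
    ∃ T : Polynomial ℝ, T.Monic ∧ T.natDegree = n ∧
      ∀ P : Polynomial ℝ, P.Monic → P.natDegree = n →
        supNormOn K T ≤ supNormOn K P := by
  have hne : K.Nonempty := hKinf.nonempty
  set f : (Fin n → ℝ) → ℝ := fun c => supNormOn K (Pc n c) with hf
  -- bound on K
  set M : ℝ := supNormOn K X with hM
  have hxM : ∀ x ∈ K, |x| ≤ M := fun x hx => by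
    simpa using le_supNormOn hK X hx
  have hM0 : 0 ≤ M := supNormOn_nonneg hK hne X
  set S : ℝ := ∑ i : Fin n, M ^ (i : ℕ) with hS
  have hS0 : 0 ≤ S := Finset.sum_nonneg fun i _ => pow_nonneg hM0 _
  -- Lipschitz bound
  have key : ∀ c c' : Fin n → ℝ, f c ≤ f c' + S * dist c c' := by
    intro c c'
    apply supNormOn_le hne
    intro x hx
    have hdecomp : (Pc n c).eval x = (Pc n c').eval x + ∑ i : Fin n, (c i - c' i) * x ^ (i : ℕ) := by
      rw [Pc_eval, Pc_eval, add_assoc, ← Finset.sum_add_distrib]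
      congr 1
      exact Finset.sum_congr rfl fun i _ => by ring
    rw [hdecomp]
    have h1 : |∑ i : Fin n, (c i - c' i) * x ^ (i : ℕ)| ≤ S * dist c c' := by
      calc |∑ i : Fin n, (c i - c' i) * x ^ (i : ℕ)|
          ≤ ∑ i : Fin n, |(c i - c' i) * x ^ (i : ℕ)| := Finset.abs_sum_le_sum_abs _ _
        _ ≤ ∑ i : Fin n, dist c c' * M ^ (i : ℕ) := by
            apply Finset.sum_le_sum
            intro i _
            rw [abs_mul, abs_pow]
            have h2 : |c i - c' i| ≤ dist c c' := by
              rw [← Real.dist_eq]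
              exact dist_le_pi_dist c c' i
            exact mul_le_mul h2 (pow_le_pow_left₀ (abs_nonneg _) (hxM x hx) _)
              (by positivity) dist_nonneg
        _ = S * dist c c' := by
            rw [hS, Finset.sum_mul]
            exact Finset.sum_congr rfl fun i _ => mul_comm _ _
    calc |(Pc n c').eval x + ∑ i : Fin n, (c i - c' i) * x ^ (i : ℕ)|
        ≤ |(Pc n c').eval x| + |∑ i : Fin n, (c i - c' i) * x ^ (i : ℕ)| := abs_add_le _ _
      _ ≤ f c' + S * dist c c' := add_le_add (le_supNormOn hK _ hx) h1
  have hf_cont : Continuous f := by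
    apply (LipschitzWith.of_dist_le_mul (K := Real.toNNReal S) ?_).continuous
    intro c c'
    rw [Real.dist_eq, Real.coe_toNNReal S hS0, abs_sub_le_iff]
    constructor
    · have := key c c'; linarith
    · have := key c' c; rw [dist_comm]; linarith
  -- distinct points in K
  obtain e := hKinf.natEmbedding K
  set x : Fin n → ℝ := fun j => (e (j : ℕ) : ℝ) with hxdef
  have hxK : ∀ j, x j ∈ K := fun j => (e (j : ℕ)).2
  have hinj : Function.Injective x := by
    intro j j' h
    have : e (j : ℕ) = e (j' : ℕ) := Subtype.ext h
    exact Fin.val_injective (e.injective this)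
  set V : Matrix (Fin n) (Fin n) ℝ := Matrix.vandermonde x with hV
  have hdet : V.det ≠ 0 := by
    rw [hV, Matrix.det_vandermonde]
    apply Finset.prod_ne_zero_iff.2
    intro i _
    apply Finset.prod_ne_zero_iff.2
    intro j hj
    rw [Finset.mem_Ioi] at hj
    exact sub_ne_zero_of_ne (fun hc => absurd (hinj hc) hj.ne')
  have hu : IsUnit V := (Matrix.isUnit_iff_isUnit_det V).2 hdet.isUnit
  have hmvinj : Function.Injective V.mulVec := Matrix.mulVec_injective_iff_isUnit.2 hu
  have hbij : Function.Bijective (Matrix.mulVecLin V) :=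
    ⟨hmvinj, LinearMap.injective_iff_surjective.1 hmvinj⟩
  set eL : (Fin n → ℝ) ≃L[ℝ] (Fin n → ℝ) :=
    (LinearEquiv.ofBijective (Matrix.mulVecLin V) hbij).toContinuousLinearEquiv with heL
  set Cst : ℝ := ‖(eL.symm : (Fin n → ℝ) →L[ℝ] (Fin n → ℝ))‖ with hCst
  have hCst0 : 0 ≤ Cst := norm_nonneg _
  have hCle : ∀ c : Fin n → ℝ, ‖c‖ ≤ Cst * ‖V.mulVec c‖ := by
    intro c
    have h1 : eL.symm (eL c) = c := eL.symm_apply_apply c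
    have h2 : eL c = V.mulVec c := rfl
    calc ‖c‖ = ‖eL.symm (eL c)‖ := by rw [h1]
      _ ≤ Cst * ‖eL c‖ := (eL.symm : (Fin n → ℝ) →L[ℝ] (Fin n → ℝ)).le_opNorm _
      _ = Cst * ‖V.mulVec c‖ := by rw [h2]
  set D : ℝ := ∑ j : Fin n, |x j ^ n| with hD
  have hD0 : 0 ≤ D := Finset.sum_nonneg fun j _ => abs_nonneg _
  have hgrowth : ∀ c : Fin n → ℝ, ‖c‖ ≤ Cst * (f c + D) := by
    intro c
    refine (hCle c).trans (mul_le_mul_of_nonneg_left ?_ hCst0)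
    have hfc0 : 0 ≤ f c := supNormOn_nonneg hK hne _
    rw [pi_norm_le_iff_of_nonneg (by linarith)]
    intro j
    have hmv : V.mulVec c j = ∑ i : Fin n, x j ^ (i : ℕ) * c i := by
      simp [hV, Matrix.mulVec, Matrix.vandermonde, dotProduct]
    have heval : (Pc n c).eval (x j) = x j ^ n + V.mulVec c j := by
      rw [Pc_eval, hmv]
      congr 1
      exact Finset.sum_congr rfl fun i _ => mul_comm _ _
    have : V.mulVec c j = (Pc n c).eval (x j) - x j ^ n := by rw [heval]; ring
    rw [Real.norm_eq_abs, this]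
    have hDj : |x j ^ n| ≤ D :=
      Finset.single_le_sum (f := fun j => |x j ^ n|) (fun j _ => abs_nonneg _)
        (Finset.mem_univ j)
    calc |(Pc n c).eval (x j) - x j ^ n|
        ≤ |(Pc n c).eval (x j)| + |x j ^ n| := abs_sub _ _
      _ ≤ f c + D := add_le_add (le_supNormOn hK _ (hxK j)) hDj
  -- coercivity gives eventual bound
  have hcoc : ∀ᶠ c in Filter.cocompact (Fin n → ℝ), f 0 ≤ f c := by
    have ht : Filter.Tendsto (fun c : Fin n → ℝ => ‖c‖) (Filter.cocompact _) Filter.atTop :=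
      tendsto_norm_cocompact_atTop
    filter_upwards [ht.eventually_ge_atTop (Cst * (f 0 + D) + 1)] with c hc
    by_contra h
    push_neg at h
    have h1 : Cst * (f c + D) ≤ Cst * (f 0 + D) :=
      mul_le_mul_of_nonneg_left (by linarith) hCst0
    linarith [hgrowth c]
  obtain ⟨c₀, hc₀⟩ := hf_cont.exists_forall_le' 0 hcoc
  refine ⟨Pc n c₀, Pc_monic n hn c₀, Pc_natDegree n hn c₀, ?_⟩
  intro P hPm hPd
  rw [Pc_rep n P hPm hPd]
  exact hc₀ _
end

section
/- For every n ≥ 1 and every monic real polynomial Q of degree n, sup_{x ∈ [-1,1]} |Q(x)| ≥ 2^{1−n}; moreover the monic polynomial 2^{1−n}·T_n, where T_n is the n-th classical Chebyshev polynomial (defined by T_n(cos θ) = cos(nθ)), satisfies sup_{x ∈ [-1,1]} |2^{1−n}T_n(x)| = 2^{1−n}. Hence 2^{1−n}T_n minimizes the sup norm on [-1,1] among monic polynomials of degree n. -/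
open Polynomial


lemma T_natDegree_le (n : ℕ) : (Polynomial.Chebyshev.T ℝ (n : ℤ)).natDegree ≤ n := by
  induction n using Nat.strong_induction_on with
  | _ n ih =>
    match n with
    | 0 => simp
    | 1 => simp
    | (k+2) =>
      have h : Polynomial.Chebyshev.T ℝ ((k+2 : ℕ) : ℤ)
          = 2 * X * Polynomial.Chebyshev.T ℝ ((k+1 : ℕ) : ℤ)
            - Polynomial.Chebyshev.T ℝ (k : ℤ) := by
        push_cast
        exact_mod_cast Polynomial.Chebyshev.T_add_two ℝ k
      rw [h]
      refine le_trans (natDegree_sub_le _ _) ?_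
      have h1 : (2 * X * Polynomial.Chebyshev.T ℝ ((k+1:ℕ) : ℤ)).natDegree ≤ k + 2 := by
        refine le_trans (natDegree_mul_le) ?_
        have : ((2 : ℝ[X]) * X).natDegree ≤ 1 := le_trans natDegree_mul_le (by simp)
        have := ih (k+1) (by omega)
        omega
      have h2 := ih k (by omega)
      simp only [max_le_iff]
      omega

lemma T_coeff_top (n : ℕ) : (Polynomial.Chebyshev.T ℝ ((n : ℤ) + 1)).coeff (n+1) = 2 ^ n := by
  induction n with
  | zero => simp
  | succ k ih =>
    have h : Polynomial.Chebyshev.T ℝ (((k:ℤ)+1) + 1)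
        = 2 * X * Polynomial.Chebyshev.T ℝ ((k:ℤ)+1) - Polynomial.Chebyshev.T ℝ (k:ℤ) := by
      rw [show ((k:ℤ)+1+1) = (k:ℤ)+2 by ring]
      exact Polynomial.Chebyshev.T_add_two ℝ k
    push_cast
    rw [h, coeff_sub, coeff_eq_zero_of_natDegree_lt (lt_of_le_of_lt (T_natDegree_le k) (by omega)),
        sub_zero, show (2 * X * Polynomial.Chebyshev.T ℝ ((k:ℤ)+1))
          = X * (C 2 * Polynomial.Chebyshev.T ℝ ((k:ℤ)+1))
            by rw [show (C 2 : ℝ[X]) = 2 from map_ofNat C 2]; ring,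
        show k+1+1 = (k+1)+1 from rfl, coeff_X_mul, coeff_C_mul, ih]
    ring

lemma T_natDegree' (n : ℕ) : (Polynomial.Chebyshev.T ℝ ((n : ℤ) + 1)).natDegree = n + 1 := by
  refine le_antisymm ?_ (le_natDegree_of_ne_zero (by rw [T_coeff_top]; positivity))
  have := T_natDegree_le (n+1)
  push_cast at this ⊢
  exact this

lemma T_leadingCoeff (n : ℕ) : (Polynomial.Chebyshev.T ℝ ((n : ℤ) + 1)).leadingCoeff = 2 ^ n := by
  rw [leadingCoeff, T_natDegree', T_coeff_top]

/-- Every monic real polynomial of degree `n ≥ 1` has sup norm at least `2^(1-n)` on `[-1,1]`,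
and the monic polynomial `2^(1-n) * T n` (the rescaled `n`-th Chebyshev polynomial of the
first kind) attains this bound. -/
theorem chebyshev_minimal_on_Icc (n : ℕ) (hn : 1 ≤ n) :
    (∀ Q : Polynomial ℝ, Q.Monic → Q.natDegree = n →
        (2 : ℝ) ^ (1 - (n : ℤ)) ≤ supNormOn (Set.Icc (-1) 1) Q) ∧
    (C ((2 : ℝ) ^ (1 - (n : ℤ))) * Polynomial.Chebyshev.T ℝ n).Monic ∧
    (C ((2 : ℝ) ^ (1 - (n : ℤ))) * Polynomial.Chebyshev.T ℝ n).natDegree = n ∧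
    supNormOn (Set.Icc (-1) 1) (C ((2 : ℝ) ^ (1 - (n : ℤ))) * Polynomial.Chebyshev.T ℝ n)
      = (2 : ℝ) ^ (1 - (n : ℤ)) := by
  obtain ⟨m, rfl⟩ : ∃ m, n = m + 1 := ⟨n - 1, by omega⟩
  set ε : ℝ := (2 : ℝ) ^ (1 - ((m+1 : ℕ) : ℤ)) with hεdef
  have hε : 0 < ε := by positivity
  have hcast : ((m+1 : ℕ) : ℤ) = (m : ℤ) + 1 := by push_cast; ring
  set P : ℝ[X] := C ε * Polynomial.Chebyshev.T ℝ ((m+1 : ℕ) : ℤ) with hPdef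
  have hTd : (Polynomial.Chebyshev.T ℝ ((m+1:ℕ):ℤ)).natDegree = m+1 := by
    rw [hcast]; exact T_natDegree' m
  have hTl : (Polynomial.Chebyshev.T ℝ ((m+1:ℕ):ℤ)).leadingCoeff = 2 ^ m := by
    rw [hcast]; exact T_leadingCoeff m
  have hPm : P.Monic := by
    show P.leadingCoeff = 1
    rw [hPdef, leadingCoeff_mul, leadingCoeff_C, hTl, hεdef, hcast,
        show (2:ℝ)^m = (2:ℝ)^((m:ℤ)) from (zpow_natCast 2 m).symm,
        ← zpow_add₀ (two_ne_zero)]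
    norm_num
  have hPd : P.natDegree = m+1 := by
    rw [hPdef, natDegree_C_mul (ne_of_gt hε), hTd]
  have hT1 : (Polynomial.Chebyshev.T ℝ ((m+1:ℕ):ℤ)).eval 1 = 1 := by
    have := Polynomial.Chebyshev.T_real_cos 0 ((m+1:ℕ):ℤ)
    simpa using this
  have habs : ∀ x ∈ Set.Icc (-1:ℝ) 1, |(Polynomial.Chebyshev.T ℝ ((m+1:ℕ):ℤ)).eval x| ≤ 1 := by
    intro x hx
    rw [← Real.cos_arccos hx.1 hx.2, Polynomial.Chebyshev.T_real_cos]
    exact Real.abs_cos_le_one _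
  have hT1' : (Polynomial.Chebyshev.T ℝ ((m:ℤ)+1)).eval 1 = 1 := by rw [← hcast]; exact hT1
  refine ⟨?_, hPm, hPd, ?_⟩
  · -- lower bound
    intro Q hQm hQd
    have hbdd : BddAbove ((fun x => |Q.eval x|) '' Set.Icc (-1:ℝ) 1) :=
      (isCompact_Icc.image (Q.continuous.abs)).bddAbove
    by_contra hcon
    push_neg at hcon
    have hlt : ∀ x ∈ Set.Icc (-1:ℝ) 1, |Q.eval x| < ε := fun x hx =>
      lt_of_le_of_lt (le_csSup hbdd ⟨x, hx, rfl⟩) hcon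
    set R : ℝ[X] := P - Q with hRdef
    have hQ0 : Q ≠ 0 := hQm.ne_zero
    have hdeg : R.degree < ((m+1 : ℕ) : WithBot ℕ) := by
      have hd : P.degree = Q.degree := by
        rw [degree_eq_natDegree hPm.ne_zero, degree_eq_natDegree hQ0, hPd, hQd]
      have hl : P.leadingCoeff = Q.leadingCoeff := by
        rw [hPm.leadingCoeff, hQm.leadingCoeff]
      have := degree_sub_lt hd hPm.ne_zero hl
      rwa [degree_eq_natDegree hPm.ne_zero, hPd] at this
    have hR1 : 0 < R.eval 1 := by
      have h1 := hlt 1 (by norm_num)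
      have h2 : R.eval 1 = ε - Q.eval 1 := by
        simp [hRdef, hPdef, hT1, hT1']
      rw [h2]
      rcases abs_lt.1 h1 with ⟨ha, hb⟩
      linarith
    have hR0 : R ≠ 0 := by
      intro h; rw [h] at hR1; simp at hR1
    set x : ℕ → ℝ := fun k => Real.cos (k * Real.pi / (m+1)) with hxdef
    have hmem : ∀ k, x k ∈ Set.Icc (-1:ℝ) 1 := fun k =>
      ⟨Real.neg_one_le_cos _, Real.cos_le_one _⟩
    have hanti : ∀ a b : ℕ, a < b → b ≤ m+1 → x b < x a := by
      intro a b hab hb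
      apply Real.cos_lt_cos_of_nonneg_of_le_pi
      · positivity
      · rw [div_le_iff₀ (by positivity)]
        have hb' : (b:ℝ) ≤ (m:ℝ)+1 := by exact_mod_cast hb
        nlinarith [Real.pi_pos]
      · have hab' : (a:ℝ) < (b:ℝ) := by exact_mod_cast hab
        have : (0:ℝ) < (m:ℝ)+1 := by positivity
        gcongr
    have hcos : ∀ k : ℕ, (Polynomial.Chebyshev.T ℝ ((m+1:ℕ):ℤ)).eval (x k) = (-1)^k := by
      intro k
      rw [hxdef]
      simp only
      rw [Polynomial.Chebyshev.T_real_cos,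
        show (((m+1:ℕ):ℤ):ℝ) * ((k:ℝ) * Real.pi / ((m:ℝ)+1)) = k * Real.pi by
          push_cast; field_simp]
      simpa using Real.cos_nat_mul_pi_sub 0 k
    have hcos' : ∀ k : ℕ,
        (Polynomial.Chebyshev.T ℝ ((m:ℤ)+1)).eval (x k) = (-1)^k := by
      intro k; rw [← hcast]; exact hcos k
    have hsign : ∀ k, k ≤ m+1 → 0 < (-1:ℝ)^k * R.eval (x k) := by
      intro k hk
      have hQk := hlt (x k) (hmem k)
      have hRk : R.eval (x k) = ε * (-1)^k - Q.eval (x k) := by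
        simp [hRdef, hPdef, hcos k, hcos' k]
      have hsq : ((-1:ℝ)^k) * ((-1:ℝ)^k) = 1 := by
        rw [← pow_add, ← two_mul, pow_mul]; norm_num
      have h1 : ((-1:ℝ))^k * Q.eval (x k) ≤ |Q.eval (x k)| := by
        calc ((-1:ℝ))^k * Q.eval (x k) ≤ |((-1:ℝ))^k * Q.eval (x k)| := le_abs_self _
          _ = |Q.eval (x k)| := by
              rw [abs_mul, abs_pow, abs_neg, abs_one, one_pow, one_mul]
      have expand : (-1:ℝ)^k * (ε * (-1)^k - Q.eval (x k))
          = ε - (-1:ℝ)^k * Q.eval (x k) := by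
        linear_combination ε * hsq
      rw [hRk, expand]
      linarith
    have hroot : ∀ k, k < m+1 → ∃ y ∈ Set.Ioo (x (k+1)) (x k), R.eval y = 0 := by
      intro k hk
      have hcont : ContinuousOn (fun t => R.eval t) (Set.Icc (x (k+1)) (x k)) :=
        R.continuous.continuousOn
      have hxlt := hanti k (k+1) (by omega) (by omega)
      rcases Nat.even_or_odd k with he | ho
      · have hpos : 0 < R.eval (x k) := by
          have := hsign k (by omega); rwa [he.neg_one_pow, one_mul] at this
        have hneg : R.eval (x (k+1)) < 0 := by
          have h := hsign (k+1) (by omega)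
          rw [(he.add_one).neg_one_pow, neg_one_mul] at h
          linarith
        obtain ⟨y, hy, hy0⟩ := intermediate_value_Ioo (le_of_lt hxlt) hcont
          (Set.mem_Ioo.2 ⟨hneg, hpos⟩)
        exact ⟨y, hy, hy0⟩
      · have hneg : R.eval (x k) < 0 := by
          have h := hsign k (by omega)
          rw [ho.neg_one_pow, neg_one_mul] at h
          linarith
        have hpos : 0 < R.eval (x (k+1)) := by
          have h := hsign (k+1) (by omega)
          rwa [(ho.add_one).neg_one_pow, one_mul] at h
        obtain ⟨y, hy, hy0⟩ := intermediate_value_Ioo' (le_of_lt hxlt) hcont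
          (Set.mem_Ioo.2 ⟨hneg, hpos⟩)
        exact ⟨y, hy, hy0⟩
    choose y hy hy0 using fun k : Fin (m+1) => hroot k k.2
    have hyanti : ∀ i j : Fin (m+1), i < j → y j < y i := by
      intro i j hij
      have h1 : y j < x (j:ℕ) := (hy j).2
      have h2 : x ((i:ℕ)+1) < y i := (hy i).1
      have h3 : x (j:ℕ) ≤ x ((i:ℕ)+1) := by
        rcases eq_or_lt_of_le (show (i:ℕ)+1 ≤ (j:ℕ) from hij) with h | h
        · rw [← h]
        · exact le_of_lt (hanti _ _ h (le_of_lt j.2))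
      linarith
    have hinj : Function.Injective y := by
      intro i j hij
      by_contra hne
      rcases lt_or_gt_of_ne hne with h | h
      · exact ne_of_gt (hyanti i j h) hij
      · exact ne_of_lt (hyanti j i h) hij
    have hsub : Finset.image y Finset.univ ⊆ R.roots.toFinset := by
      intro a ha
      simp only [Finset.mem_image, Finset.mem_univ, true_and] at ha
      obtain ⟨i, rfl⟩ := ha
      rw [Multiset.mem_toFinset, mem_roots hR0]
      exact hy0 i
    have hcard : m+1 ≤ R.natDegree := by
      calc m+1 = (Finset.image y Finset.univ).card := by
            rw [Finset.card_image_of_injective _ hinj]; simp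
        _ ≤ R.roots.toFinset.card := Finset.card_le_card hsub
        _ ≤ Multiset.card R.roots := R.roots.toFinset_card_le
        _ ≤ R.natDegree := R.card_roots'
    have : R.natDegree < m+1 := (natDegree_lt_iff_degree_lt hR0).2 hdeg
    omega
  · -- sup norm attained
    have hg : IsGreatest ((fun x => |P.eval x|) '' Set.Icc (-1:ℝ) 1) ε := by
      constructor
      · refine ⟨1, by norm_num, ?_⟩
        simp [hPdef, hT1, hT1', abs_of_pos hε]
      · rintro v ⟨t, ht, rfl⟩
        simp only [hPdef, eval_mul, eval_C, abs_mul, abs_of_pos hε]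
        have := habs t ht
        nlinarith
    exact hg.csSup_eq
end

section
/- Let a < b be real numbers and n ≥ 1. Then for every monic real polynomial P of degree n, sup_{x ∈ [a,b]} |P(x)| ≥ 2·((b−a)/4)^n, and this bound is attained by the monic polynomial 2·((b−a)/4)^n · T_n((2X − a − b)/(b − a)), where T_n is the n-th classical Chebyshev polynomial. -/
open Polynomial

/-
The affine substitution `x = (a + b)/2 + t (b - a)/2` carries a monic `P` of degree `n` to a
polynomial of leading coefficient `((b - a)/2)^n` bounded on `[-1, 1]` by the sup norm of `P` on
`[a, b]`; the extremal property of `T_n` (leading coefficient at most `2^(n-1)` times the sup norm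
on `[-1, 1]`) then gives the bound. For the rescaled `T_n` the sup norm is reached at `x = b`,
where the argument of `T_n` is `1`.
-/

open Set

namespace Polynomial

variable {R : Type*} [Semiring R] [NoZeroDivisors R] {c : R}

theorem natDegree_comp_linear (hc : c ≠ 0) (d : R) (p : R[X]) :
    (p.comp (C c * X + C d)).natDegree = p.natDegree := by
  rw [natDegree_comp, natDegree_linear hc, mul_one]

theorem leadingCoeff_comp_linear (hc : c ≠ 0) (d : R) (p : R[X]) :
    (p.comp (C c * X + C d)).leadingCoeff = p.leadingCoeff * c ^ p.natDegree := by
  rw [leadingCoeff_comp (by rw [natDegree_linear hc]; exact one_ne_zero), leadingCoeff_linear hc]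

namespace Chebyshev

theorem leadingCoeff_le_mul_of_forall_abs_le {n : ℕ} {P : ℝ[X]} {M : ℝ}
    (hPdeg : P.degree ≤ n) (hPbnd : ∀ x ∈ Icc (-1) 1, |P.eval x| ≤ M) :
    P.leadingCoeff ≤ 2 ^ (n - 1) * M := by
  have hM : 0 ≤ M := (abs_nonneg _).trans (hPbnd 0 ⟨by norm_num, by norm_num⟩)
  rcases hM.eq_or_lt with rfl | hM
  · have hP : P = 0 := eq_zero_of_infinite_isRoot P <|
      (Icc_infinite (by norm_num : (-1 : ℝ) < 1)).mono fun x hx => abs_nonpos_iff.mp (hPbnd x hx)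
    simp [hP]
  have hscaled := leadingCoeff_le_of_forall_abs_le_one (P := Polynomial.C M⁻¹ * P)
    ((degree_C_mul (inv_ne_zero hM.ne')).trans_le hPdeg) fun x hx => by
      rw [eval_mul, eval_C, abs_mul, abs_inv, abs_of_pos hM]
      exact inv_mul_le_one_of_le₀ (hPbnd x hx) hM.le
  rwa [leadingCoeff_mul, leadingCoeff_C, inv_mul_le_iff₀ hM, mul_comm] at hscaled

end Chebyshev

end Polynomial

theorem abs_eval_le_supNormOn {K : Set ℝ} (hK : IsCompact K) (P : ℝ[X]) {x : ℝ}
    (hx : x ∈ K) :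
    |P.eval x| ≤ supNormOn K P :=
  le_csSup (hK.image P.continuous.abs).bddAbove ⟨x, hx, rfl⟩

theorem two_mul_div_four_pow_le_supNormOn_Icc {a b : ℝ} (hab : a < b) {n : ℕ} (hn : 1 ≤ n)
    {P : ℝ[X]} (hP : P.Monic) (hPn : P.natDegree = n) :
    2 * ((b - a) / 4) ^ n ≤ supNormOn (Icc a b) P := by
  have hc : (b - a) / 2 ≠ 0 := by linarith
  set Q := P.comp (C ((b - a) / 2) * X + C ((a + b) / 2))
  have hQdeg : Q.degree ≤ n := by
    rw [← hPn, ← natDegree_comp_linear hc]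
    exact degree_le_natDegree
  have hQbnd : ∀ t ∈ Icc (-1) 1, |Q.eval t| ≤ supNormOn (Icc a b) P := by
    rintro t ⟨ht₁, ht₂⟩
    have hx : (b - a) / 2 * t + (a + b) / 2 ∈ Icc a b := by constructor <;> nlinarith
    simpa [Q] using abs_eval_le_supNormOn isCompact_Icc P hx
  have key := Chebyshev.leadingCoeff_le_mul_of_forall_abs_le hQdeg hQbnd
  rw [leadingCoeff_comp_linear hc, hP.leadingCoeff, hPn, one_mul] at key
  obtain ⟨m, rfl⟩ : ∃ m, n = m + 1 := ⟨n - 1, by omega⟩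
  calc 2 * ((b - a) / 4) ^ (m + 1) = ((b - a) / 2) ^ (m + 1) / 2 ^ m := by
        rw [show (b - a) / 4 = (b - a) / 2 / 2 by ring, div_pow _ 2, pow_succ 2 m]
        field_simp
    _ ≤ supNormOn (Icc a b) P := by
        rw [div_le_iff₀ (by positivity), mul_comm]
        simpa using key

theorem eval_affine (a b x : ℝ) :
    (C (2 / (b - a)) * X - C ((a + b) / (b - a))).eval x = (2 * x - (a + b)) / (b - a) := by
  simp only [eval_sub, eval_mul, eval_C, eval_X]
  ring

theorem eval_affine_mem_Icc_neg_one_one {a b : ℝ} (hab : a < b) {x : ℝ} (hx : x ∈ Icc a b) :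
    (C (2 / (b - a)) * X - C ((a + b) / (b - a))).eval x ∈ Icc (-1) 1 := by
  have hba : 0 < b - a := by linarith
  rw [eval_affine, mem_Icc, le_div_iff₀ hba, div_le_iff₀ hba]
  constructor <;> linarith [hx.1, hx.2]

theorem supNormOn_Icc_C_mul_T_comp_affine {a b : ℝ} (hab : a < b) (n : ℕ) {M : ℝ}
    (hM : 0 ≤ M) :
    supNormOn (Icc a b)
      (C M * (Chebyshev.T ℝ n).comp (C (2 / (b - a)) * X - C ((a + b) / (b - a)))) = M := by
  have hb : (C (2 / (b - a)) * X - C ((a + b) / (b - a))).eval b = 1 := by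
    rw [eval_affine, div_eq_one_iff_eq (by linarith)]
    ring
  refine IsGreatest.csSup_eq ⟨⟨b, right_mem_Icc.2 hab.le, ?_⟩, ?_⟩
  · simp [hb, abs_of_nonneg hM]
  · rintro _ ⟨x, hx, rfl⟩
    dsimp only
    rw [eval_mul, eval_C, eval_comp, abs_mul, abs_of_nonneg hM]
    refine mul_le_of_le_one_right hM (Chebyshev.abs_eval_T_real_le_one n ?_)
    exact abs_le.2 (eval_affine_mem_Icc_neg_one_one hab hx)

theorem monic_C_mul_T_comp_affine {a b : ℝ} (hab : a < b) {n : ℕ} (hn : 1 ≤ n) :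
    (C (2 * ((b - a) / 4) ^ n) *
      (Chebyshev.T ℝ n).comp (C (2 / (b - a)) * X - C ((a + b) / (b - a)))).Monic := by
  have hc : 2 / (b - a) ≠ 0 := div_ne_zero two_ne_zero (by linarith)
  obtain ⟨m, rfl⟩ : ∃ m, n = m + 1 := ⟨n - 1, by omega⟩
  rw [Monic, sub_eq_add_neg (C _ * X), ← C_neg, leadingCoeff_mul, leadingCoeff_C,
    leadingCoeff_comp_linear hc, Chebyshev.leadingCoeff_T, Chebyshev.natDegree_T]
  simp only [Int.natAbs_natCast, Nat.add_sub_cancel]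
  have half : (b - a) / 4 * (2 / (b - a)) = 2⁻¹ := by
    field_simp [show b - a ≠ 0 by linarith]
    norm_num
  calc _ = 2 ^ m * 2 * ((b - a) / 4 * (2 / (b - a))) ^ (m + 1) := by rw [mul_pow]; ring
    _ = 1 := by rw [half, ← pow_succ, ← mul_pow, mul_inv_cancel₀ two_ne_zero, one_pow]

/-- Every monic real polynomial of degree `n ≥ 1` has sup norm at least `2 * ((b-a)/4)^n` on
`[a,b]`, and the bound is attained by `2 * ((b-a)/4)^n * T_n((2X - a - b)/(b - a))`, where
`T_n` is the `n`-th Chebyshev polynomial of the first kind. -/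
theorem chebyshev_minimal_on_Icc_general (a b : ℝ) (hab : a < b) (n : ℕ) (hn : 1 ≤ n) :
    (∀ P : Polynomial ℝ, P.Monic → P.natDegree = n →
        2 * ((b - a) / 4) ^ n ≤ supNormOn (Set.Icc a b) P) ∧
    supNormOn (Set.Icc a b)
        (C (2 * ((b - a) / 4) ^ n) *
          (Polynomial.Chebyshev.T ℝ n).comp (C (2 / (b - a)) * X - C ((a + b) / (b - a))))
      = 2 * ((b - a) / 4) ^ n ∧
    (C (2 * ((b - a) / 4) ^ n) *
        (Polynomial.Chebyshev.T ℝ n).comp (C (2 / (b - a)) * X - C ((a + b) / (b - a)))).Monic :=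
  ⟨fun _ hP hPn => two_mul_div_four_pow_le_supNormOn_Icc hab hn hP hPn,
    supNormOn_Icc_C_mul_T_comp_affine hab n (by have := sub_pos.2 hab; positivity),
    monic_C_mul_T_comp_affine hab hn⟩
end

section
/- Let K be a compact subset of ℝ of infinite cardinality with cap(K) ≥ 1, and let f : K → ℝ be a continuous function which is a uniform limit on K of a sequence of polynomials with integer coefficients. Then f itself coincides on K with a polynomial with integer coefficients (the approximating sequence is eventually constant on K). -/
open Polynomial Filter

/-- `m_n(K)`: the infimum of sup norms on `K` of monic real polynomials of degree `n`. -/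
noncomputable def chebInf (K : Set ℝ) (n : ℕ) : ℝ :=
  sInf (supNormOn K '' {P : Polynomial ℝ | P.Monic ∧ P.natDegree = n})

lemma le_supNormOn {K : Set ℝ} (hK : IsCompact K) (P : Polynomial ℝ) {x : ℝ}
    (hx : x ∈ K) : |P.eval x| ≤ supNormOn K P :=
  le_csSup ((hK.image_of_continuousOn ((P.continuous.abs).continuousOn)).bddAbove)
    (Set.mem_image_of_mem _ hx)

lemma supNormOn_le {K : Set ℝ} (hne : K.Nonempty) (P : Polynomial ℝ) {B : ℝ}
    (h : ∀ x ∈ K, |P.eval x| ≤ B) : supNormOn K P ≤ B := by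
  apply csSup_le (hne.image _)
  rintro y ⟨x, hx, rfl⟩
  exact h x hx

lemma supNormOn_nonneg {K : Set ℝ} (hK : IsCompact K) (hne : K.Nonempty)
    (P : Polynomial ℝ) : 0 ≤ supNormOn K P := by
  obtain ⟨x, hx⟩ := hne
  exact le_trans (abs_nonneg _) (le_supNormOn hK P hx)

lemma chebInf_nonneg {K : Set ℝ} (hK : IsCompact K) (hne : K.Nonempty) (n : ℕ) :
    0 ≤ chebInf K n := by
  apply le_csInf
  · exact ⟨supNormOn K (X ^ n), ⟨X ^ n, ⟨monic_X_pow n, natDegree_X_pow n⟩, rfl⟩⟩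
  · rintro y ⟨Q, _, rfl⟩
    exact supNormOn_nonneg hK hne Q

lemma chebInf_le {K : Set ℝ} (hK : IsCompact K) (hne : K.Nonempty) {M : Polynomial ℝ}
    {n : ℕ} (hM : M.Monic) (hd : M.natDegree = n) : chebInf K n ≤ supNormOn K M := by
  apply csInf_le
  · exact ⟨0, by rintro y ⟨Q, _, rfl⟩; exact supNormOn_nonneg hK hne Q⟩
  · exact ⟨M, ⟨hM, hd⟩, rfl⟩

/-- Key lemma: if `cap K ≥ 1`, an integer polynomial with sup norm `< 1` on `K` is zero. -/
lemma int_poly_small_sup_eq_zero {K : Set ℝ} (hK : IsCompact K) (hne : K.Nonempty)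
    {c : ℝ} (hc : Tendsto (fun n : ℕ => chebInf K n ^ ((n : ℝ)⁻¹)) atTop (nhds c))
    (hcap : 1 ≤ c) (Q : Polynomial ℤ)
    (hs : supNormOn K (Q.map (Int.castRingHom ℝ)) < 1) : Q = 0 := by
  by_contra hQ
  set Qr : Polynomial ℝ := Q.map (Int.castRingHom ℝ) with hQr
  have hQrne : Qr ≠ 0 := by
    intro h
    exact hQ (Polynomial.map_injective _ (Int.cast_injective) (by simpa using h))
  have hdeg : Qr.natDegree = Q.natDegree :=
    Polynomial.natDegree_map_eq_of_injective (Int.cast_injective) Q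
  have hlead : Qr.leadingCoeff = (Q.leadingCoeff : ℝ) := by
    rw [Polynomial.leadingCoeff, hdeg, hQr, Polynomial.coeff_map]; rfl
  have hla : (1 : ℝ) ≤ |(Q.leadingCoeff : ℝ)| := by
    have h1 : (1 : ℤ) ≤ |Q.leadingCoeff| :=
      Int.one_le_abs (Polynomial.leadingCoeff_ne_zero.mpr hQ)
    exact_mod_cast h1
  set d := Q.natDegree with hd
  set s := supNormOn K Qr with hsdef
  have hs0 : 0 ≤ s := supNormOn_nonneg hK hne Qr
  rcases Nat.eq_zero_or_pos d with hd0 | hdpos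
  · -- constant case: |leading coeff| ≥ 1 but sup norm < 1
    have hQr0 : Qr.natDegree = 0 := hdeg.trans hd0
    obtain ⟨x, hx⟩ := hne
    have h1 : |Qr.eval x| ≤ s := le_supNormOn hK Qr hx
    have h2 : |Qr.eval x| = |(Q.leadingCoeff : ℝ)| := by
      conv_lhs => rw [Polynomial.eq_C_of_natDegree_eq_zero hQr0, Polynomial.eval_C]
      rw [← hlead, Polynomial.leadingCoeff, hQr0]
    linarith [hla, hs]
  · -- positive degree: use powers of monic normalization
    set a : ℝ := (Q.leadingCoeff : ℝ) with ha
    have hane : a ≠ 0 := by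
      intro h; rw [h] at hla; simp at hla; linarith
    have haInv : (a⁻¹ : ℝ) ≠ 0 := inv_ne_zero hane
    set M : Polynomial ℝ := C a⁻¹ * Qr with hM
    have hMmonic : M.Monic := by
      unfold Polynomial.Monic
      rw [hM, Polynomial.leadingCoeff_mul, Polynomial.leadingCoeff_C, hlead]
      exact inv_mul_cancel₀ hane
    have hMdeg : M.natDegree = d := by
      rw [hM, Polynomial.natDegree_C_mul haInv, hdeg]
    have hMeval : ∀ x ∈ K, |M.eval x| ≤ s := by
      intro x hx
      rw [hM]
      have h1 : |Qr.eval x| ≤ s := le_supNormOn hK Qr hx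
      have h2 : |a⁻¹| ≤ 1 := by
        rw [abs_inv]
        exact inv_le_one_of_one_le₀ hla
      calc |(C a⁻¹ * Qr).eval x| = |a⁻¹| * |Qr.eval x| := by
              rw [Polynomial.eval_mul, Polynomial.eval_C, abs_mul]
        _ ≤ 1 * s := mul_le_mul h2 h1 (abs_nonneg _) zero_le_one
        _ = s := one_mul s
    -- chebInf K (d * j) ≤ s ^ j
    have hcheb : ∀ j : ℕ, chebInf K (d * j) ≤ s ^ j := by
      intro j
      have hpow : (M ^ j).Monic := hMmonic.pow j
      have hpdeg : (M ^ j).natDegree = d * j := by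
        rw [Polynomial.natDegree_pow, hMdeg, Nat.mul_comm]
      refine le_trans (chebInf_le hK hne hpow hpdeg) (supNormOn_le hne _ ?_)
      intro x hx
      rw [Polynomial.eval_pow, abs_pow]
      exact pow_le_pow_left₀ (abs_nonneg _) (hMeval x hx) j
    -- the subsequence along n = d * j tends to c
    have htend : Tendsto (fun j : ℕ => chebInf K (d * j) ^ (((d * j : ℕ) : ℝ))⁻¹)
        atTop (nhds c) := by
      apply hc.comp
      apply tendsto_atTop_mono (fun j => Nat.le_mul_of_pos_left j hdpos) tendsto_id
    have hle : ∀ᶠ j : ℕ in atTop, chebInf K (d * j) ^ (((d * j : ℕ) : ℝ))⁻¹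
        ≤ s ^ ((d : ℝ))⁻¹ := by
      filter_upwards [eventually_ge_atTop 1] with j hj
      have hdj : (0:ℝ) < (d * j : ℕ) := by positivity
      have h1 : chebInf K (d * j) ^ (((d * j : ℕ) : ℝ))⁻¹
          ≤ (s ^ j) ^ (((d * j : ℕ) : ℝ))⁻¹ :=
        Real.rpow_le_rpow (chebInf_nonneg hK hne _) (hcheb j) (by positivity)
      refine h1.trans_eq ?_
      rw [← Real.rpow_natCast s j, ← Real.rpow_mul hs0]
      congr 1
      have hj0 : (j : ℝ) ≠ 0 := Nat.cast_ne_zero.mpr (by omega)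
      have hd0' : (d : ℝ) ≠ 0 := Nat.cast_ne_zero.mpr (by omega)
      push_cast
      field_simp
    have hcle : c ≤ s ^ ((d : ℝ))⁻¹ := le_of_tendsto htend hle
    have hlt : s ^ ((d : ℝ))⁻¹ < 1 := by
      rcases eq_or_lt_of_le hs0 with h0 | h0
      · rw [← h0, Real.zero_rpow (by positivity : ((d:ℝ))⁻¹ ≠ 0)]; norm_num
      · exact Real.rpow_lt_one hs0 hs (by positivity)
    linarith

/-- If `cap(K) ≥ 1` and a continuous `f : K → ℝ` is a uniform limit on `K` of integer
polynomials, then `f` coincides on `K` with an integer polynomial. -/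
theorem uniform_limit_eq_int_poly (K : Set ℝ) (hK : IsCompact K) (hKinf : K.Infinite)
    (c : ℝ) (hc : Tendsto (fun n : ℕ => chebInf K n ^ ((n : ℝ)⁻¹)) atTop (nhds c))
    (hcap : 1 ≤ c)
    (f : ℝ → ℝ) (hf : ContinuousOn f K)
    (P : ℕ → Polynomial ℤ)
    (hP : TendstoUniformlyOn (fun n x => (Polynomial.aeval x (P n) : ℝ)) f atTop K) :
    ∃ R : Polynomial ℤ, ∀ x ∈ K, f x = Polynomial.aeval x R := by
  have hne : K.Nonempty := hKinf.nonempty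
  have hcauchy := (hP.uniformCauchySeqOn)
  rw [Metric.uniformCauchySeqOn_iff] at hcauchy
  obtain ⟨N, hN⟩ := hcauchy (1/2) (by norm_num)
  refine ⟨P N, fun x hx => ?_⟩
  have hconst : ∀ n ≥ N, P n = P N := by
    intro n hn
    have key : supNormOn K ((P n - P N).map (Int.castRingHom ℝ)) < 1 := by
      have hle : supNormOn K ((P n - P N).map (Int.castRingHom ℝ)) ≤ 1/2 := by
        apply supNormOn_le hne
        intro y hy
        have h1 := hN n hn N (le_refl N) y hy
        rw [Real.dist_eq] at h1
        have h2 : ((P n - P N).map (Int.castRingHom ℝ)).eval y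
            = (Polynomial.aeval y (P n) : ℝ) - Polynomial.aeval y (P N) := by
          simp [Polynomial.eval_map, Polynomial.aeval_def, Polynomial.eval₂_sub]
        rw [h2]
        linarith [h1]
      linarith
    have := int_poly_small_sup_eq_zero hK hne hc hcap (P n - P N) key
    exact sub_eq_zero.mp this
  have htx : Tendsto (fun n => (Polynomial.aeval x (P n) : ℝ)) atTop (nhds (f x)) :=
    hP.tendsto_at hx
  have h2 : Tendsto (fun n => (Polynomial.aeval x (P n) : ℝ)) atTop
      (nhds (Polynomial.aeval x (P N))) := by
    apply Tendsto.congr' _ tendsto_const_nhds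
    filter_upwards [eventually_ge_atTop N] with n hn
    rw [hconst n hn]
  exact tendsto_nhds_unique htx h2
end

section
/- Let x_1, …, x_r be distinct real algebraic integers such that, for each i, the minimal polynomial of x_i over ℤ has a complex root that does not belong to the set {x_1, …, x_r}. Then the set { (Q(x_1), …, Q(x_r)) : Q a polynomial with integer coefficients } is dense in ℝ^r. -/
/-!
If the values were not dense, their closure would be a proper closed subgroup of `ℝ^r`. Such a
subgroup contains a largest subspace `V`, and its intersection with a complement of `V` is
discrete, hence lies in a lattice or in a hyperplane; either way some nonzero linear form
`φ v = ∑ cᵢ vᵢ` is integer-valued on it. Evaluating `φ` at the values of `Tⁿ` gives `∑ cᵢ xᵢⁿ ∈ ℤ` for all `n`.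

Since the characters `n ↦ wⁿ` of distinct `w` are linearly independent, the `cᵢ` are determined by
these integers and therefore lie in `L = ℚ(x₁, …, x_r)`. An embedding `σ : L → ℂ` sending `xᵢ` to
a conjugate `z ∉ {x_j}` gives a second relation `∑ σ(c_j) σ(x_j)ⁿ = ∑ c_j x_jⁿ`, in which the
frequency `z` carries the coefficient `σ(cᵢ)` on one side and nothing on the other. Hence `cᵢ = 0`
for all `i`, i.e. `φ = 0`.
-/

open Polynomial Filter Topology Module Finset

theorem abs_floor_div_mul_sub_le {α : Type*} [Field α] [LinearOrder α] [IsStrictOrderedRing α]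
    [FloorRing α] (t : α) {ε : α} (hε : 0 < ε) : |⌊t / ε⌋ * ε - t| ≤ ε := by
  have : ⌊t / ε⌋ * ε - t = -(Int.fract (t / ε) * ε) := by
    rw [Int.fract, sub_mul, div_mul_cancel₀ _ hε.ne']
    ring
  rw [this, abs_neg, abs_of_nonneg (mul_nonneg (Int.fract_nonneg _) hε.le)]
  exact mul_le_of_le_one_left hε.le (Int.fract_lt_one _).le

def AddSubgroup.lineal {R M : Type*} [Ring R] [AddCommGroup M] [Module R M]
    (K : AddSubgroup M) : Submodule R M where
  carrier := {v | ∀ t : R, t • v ∈ K}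
  add_mem' hv hw t := by simpa only [smul_add] using K.add_mem (hv t) (hw t)
  zero_mem' t := by simpa only [smul_zero] using K.zero_mem
  smul_mem' c v hv t := by simpa only [smul_smul] using hv (t * c)

section ClosedSubgroup

variable {E : Type*} [NormedAddCommGroup E] [NormedSpace ℝ E] [FiniteDimensional ℝ E]

theorem AddSubgroup.exists_forall_smul_mem_of_isClosed {K : AddSubgroup E}
    (hK : IsClosed (K : Set E)) (h : ∀ ε > 0, ∃ g ∈ K, ‖g‖ < ε ∧ g ≠ 0) :
    ∃ v ≠ 0, ∀ t : ℝ, t • v ∈ K := by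
  choose g hgK hgε hg0 using fun n : ℕ => h (1 / (n + 1)) Nat.one_div_pos_of_nat
  have hgpos : ∀ n, 0 < ‖g n‖ := fun n => norm_pos_iff.mpr (hg0 n)
  have hglim : Tendsto (fun n => ‖g n‖) atTop (𝓝 0) :=
    squeeze_zero (fun n => (hgpos n).le) (fun n => (hgε n).le)
      tendsto_one_div_add_atTop_nhds_zero_nat
  -- `v` is a limit of the directions of the `g n`; multiples `⌊t / ‖g n‖⌋ • g n` approach `t • v`
  obtain ⟨v, hv, ψ, hψ, hconv⟩ := (isCompact_sphere (0 : E) 1).tendsto_subseq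
    (x := fun n => ‖g n‖⁻¹ • g n) fun n => by simpa using norm_smul_inv_norm (𝕜 := ℝ) (hg0 n)
  refine ⟨v, ne_zero_of_mem_sphere one_ne_zero ⟨v, hv⟩, fun t => ?_⟩
  set s : ℕ → ℝ := fun n => ⌊t / ‖g n‖⌋ * ‖g n‖
  have hs : Tendsto s atTop (𝓝 t) :=
    tendsto_iff_norm_sub_tendsto_zero.mpr <| squeeze_zero (fun _ => norm_nonneg _)
      (fun n => abs_floor_div_mul_sub_le t (hgpos n)) hglim
  refine hK.mem_of_tendsto ((hs.comp hψ.tendsto_atTop).smul hconv)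
    (Eventually.of_forall fun n => ?_)
  have : s (ψ n) • ‖g (ψ n)‖⁻¹ • g (ψ n) = ⌊t / ‖g (ψ n)‖⌋ • g (ψ n) := by
    rw [smul_smul, mul_assoc, mul_inv_cancel₀ (hgpos _).ne', mul_one, Int.cast_smul_eq_zsmul]
  simpa only [Function.comp_apply, this, SetLike.mem_coe] using K.zsmul_mem (hgK _) _

theorem IsZLattice.exists_dual_intValued [Nontrivial E] (L : Submodule ℤ E) [DiscreteTopology L]
    [IsZLattice ℝ L] : ∃ φ : E →ₗ[ℝ] ℝ, φ ≠ 0 ∧ ∀ g ∈ L, ∃ m : ℤ, φ g = m := by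
  let b := Basis.ofZLatticeBasis ℝ L (Free.chooseBasis ℤ L)
  obtain ⟨i⟩ : Nonempty (Free.ChooseBasisIndex ℤ L) := by
    rw [← Fintype.card_pos_iff, ← finrank_eq_card_chooseBasisIndex, ZLattice.rank ℝ L]
    exact finrank_pos
  refine ⟨b.coord i, fun h => by simpa using LinearMap.congr_fun h (b i), fun g hg => ?_⟩
  have hgb : g ∈ Submodule.span ℤ (Set.range b) := by
    rwa [Basis.ofZLatticeBasis_span ℝ]
  obtain ⟨m, hm⟩ := (b.mem_span_iff_repr_mem ℤ g).mp hgb i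
  exact ⟨m, hm.symm⟩

theorem AddSubgroup.exists_dual_intValued_of_discrete [Nontrivial E] {K : AddSubgroup E}
    (hK : ∃ ε > 0, ∀ g ∈ K, ‖g‖ < ε → g = 0) :
    ∃ φ : E →ₗ[ℝ] ℝ, φ ≠ 0 ∧ ∀ g ∈ K, ∃ m : ℤ, φ g = m := by
  obtain ⟨ε, hε, hsmall⟩ := hK
  let L := K.toIntSubmodule
  have : DiscreteTopology L := by
    rw [discreteTopology_iff_isOpen_singleton_zero, isOpen_induced_iff]
    refine ⟨Metric.ball 0 ε, Metric.isOpen_ball, Set.ext fun g => ?_⟩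
    simp only [Set.mem_preimage, Metric.mem_ball, dist_zero_right, Set.mem_singleton_iff]
    exact ⟨fun hg => Subtype.ext (hsmall g g.2 hg), fun hg => by simpa [hg] using hε⟩
  by_cases hspan : Submodule.span ℝ (L : Set E) = ⊤
  · have : IsZLattice ℝ L := ⟨hspan⟩
    exact IsZLattice.exists_dual_intValued L
  · obtain ⟨φ, hφ0, hφ⟩ := (Submodule.span ℝ (L : Set E)).exists_dual_map_eq_bot_of_lt_top
      (lt_top_iff_ne_top.mpr hspan) inferInstance
    refine ⟨φ, hφ0, fun g hg => ⟨0, ?_⟩⟩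
    have := Submodule.mem_map_of_mem (f := φ) (Submodule.subset_span (R := ℝ) (s := (L : Set E)) hg)
    simpa [hφ] using this

theorem AddSubgroup.exists_dual_intValued_of_not_dense {H : AddSubgroup E}
    (hH : ¬Dense (H : Set E)) : ∃ φ : E →ₗ[ℝ] ℝ, φ ≠ 0 ∧ ∀ g ∈ H, ∃ m : ℤ, φ g = m := by
  set K := H.topologicalClosure
  set V : Submodule ℝ E := K.lineal
  have hVK : ∀ v ∈ V, v ∈ K := fun v hv => by simpa using hv 1
  have hV : V ≠ ⊤ := fun hV => hH <| by
    rw [dense_iff_closure_eq, ← H.topologicalClosure_coe]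
    exact Set.eq_univ_of_forall fun v => hVK v (hV ▸ trivial)
  obtain ⟨W, hVW⟩ := V.exists_isCompl
  have : Nontrivial W :=
    Submodule.nontrivial_iff_ne_bot.mpr fun hW => hV (eq_top_of_isCompl_bot (hW ▸ hVW))
  obtain ⟨ψ, hψ0, hψ⟩ := (K.comap W.subtype.toAddMonoidHom).exists_dual_intValued_of_discrete (by
    by_contra! hnd
    obtain ⟨v, hv0, hv⟩ := AddSubgroup.exists_forall_smul_mem_of_isClosed
      (H.isClosed_topologicalClosure.preimage continuous_subtype_val) hnd
    exact hv0 (Subtype.ext (hVW.disjoint.eq_bot ▸ ⟨hv, v.2⟩ : (v : E) ∈ (⊥ : Submodule ℝ E))))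
  refine ⟨ψ ∘ₗ W.projectionOnto V hVW.symm, fun hφ => hψ0 ?_, fun g hg => hψ _ ?_⟩
  · ext w
    simpa [Submodule.projectionOnto_apply_left] using LinearMap.congr_fun hφ w
  · change (W.projectionOnto V hVW.symm g : E) ∈ K
    rw [Submodule.coe_projectionOnto_apply, Submodule.projection_eq_self_sub_projection hVW,
      Submodule.projection_apply]
    exact K.sub_mem (H.le_topologicalClosure hg) (hVK _ (Submodule.coe_mem _))

end ClosedSubgroup

section PowerSums

theorem sum_fiber_eq_zero_of_forall_sum_mul_pow_eq_zero {ι F : Type*} [Fintype ι] [Field F]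
    [DecidableEq F] {w a : ι → F} (h : ∀ n : ℕ, ∑ i, a i * w i ^ n = 0) (v : F) :
    ∑ i with w i = v, a i = 0 := by
  have hli := (linearIndependent_monoidHom (Multiplicative ℕ) F).comp (powersHom F)
    (powersHom F).injective
  by_cases hv : v ∈ univ.image w
  · refine linearIndependent_iff'.mp hli _ (fun u => ∑ i with w i = u, a i) ?_ v hv
    funext m
    simp only [Function.comp_apply, Finset.sum_apply, Pi.smul_apply, powersHom_apply,
      smul_eq_mul, Finset.sum_mul, Pi.zero_apply]
    calc ∑ u ∈ univ.image w, ∑ i with w i = u, a i * u ^ m.toAdd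
        = ∑ u ∈ univ.image w, ∑ i with w i = u, a i * w i ^ m.toAdd :=
          sum_congr rfl fun u _ => sum_congr rfl fun i hi => by rw [(mem_filter.mp hi).2]
      _ = 0 :=
          (sum_fiberwise_of_maps_to (fun i _ => mem_image_of_mem w (mem_univ i)) _).trans (h _)
  · refine sum_eq_zero fun i hi => absurd ?_ hv
    exact (mem_filter.mp hi).2 ▸ mem_image_of_mem w (mem_univ i)

theorem eq_zero_of_forall_sum_mul_pow_eq_zero {ι F : Type*} [Fintype ι] [Field F]
    {w a : ι → F} (hw : Function.Injective w) (h : ∀ n : ℕ, ∑ i, a i * w i ^ n = 0) (i : ι) :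
    a i = 0 := by
  classical
  simpa [hw.eq_iff, sum_filter] using sum_fiber_eq_zero_of_forall_sum_mul_pow_eq_zero h (w i)

variable {K Ω ι : Type*} [Field K] [Field Ω] [Algebra K Ω] [Fintype ι]

theorem mem_adjoin_of_forall_sum_mul_pow_mem_range {y c : ι → Ω} (hy : Function.Injective y)
    (hc : ∀ n : ℕ, ∑ i, c i * y i ^ n ∈ Set.range (algebraMap K Ω)) (i : ι) :
    c i ∈ IntermediateField.adjoin K (Set.range y) := by
  set L := IntermediateField.adjoin K (Set.range y)
  have hyL : ∀ i, y i ∈ L := fun i => IntermediateField.subset_adjoin K _ ⟨i, rfl⟩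
  -- an `L`-linear retraction `g : Ω → L` turns `c` into a solution `g ∘ c` of the same system
  obtain ⟨g, hg⟩ := (Algebra.linearMap L Ω).exists_leftInverse_of_injective
    (LinearMap.ker_eq_bot.mpr (algebraMap L Ω).injective)
  suffices ∀ n : ℕ, ∑ i, ((g (c i) : Ω) - c i) * y i ^ n = 0 by
    rw [← sub_eq_zero.mp (eq_zero_of_forall_sum_mul_pow_eq_zero hy this i)]
    exact (g (c i)).2
  intro n
  obtain ⟨a, ha⟩ := hc n
  have hga : g (algebraMap K Ω a) = algebraMap K L a := LinearMap.congr_fun hg (algebraMap K L a)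
  have hgsum : algebraMap K L a = ∑ i, g (c i) * ⟨y i, hyL i⟩ ^ n := by
    rw [← hga, ha, map_sum]
    refine sum_congr rfl fun i _ => ?_
    rw [mul_comm, mul_comm (g (c i))]
    exact g.map_smul (⟨y i, hyL i⟩ ^ n) (c i)
  simpa [sub_mul, sub_eq_zero, ← ha] using congrArg ((↑) : L → Ω) hgsum.symm

theorem eq_zero_of_forall_sum_mul_pow_mem_range [IsAlgClosed Ω] {y c : ι → Ω}
    (hy : Function.Injective y) (hyint : ∀ i, IsIntegral K (y i))
    (hc : ∀ n : ℕ, ∑ i, c i * y i ^ n ∈ Set.range (algebraMap K Ω)) {i₀ : ι} {z : Ω}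
    (hz : aeval z (minpoly K (y i₀)) = 0) (hzy : ∀ i, z ≠ y i) : c i₀ = 0 := by
  classical
  set L := IntermediateField.adjoin K (Set.range y)
  let y' : ι → L := fun i => ⟨y i, IntermediateField.subset_adjoin K _ ⟨i, rfl⟩⟩
  let c' : ι → L := fun i => ⟨c i, mem_adjoin_of_forall_sum_mul_pow_mem_range hy hc i⟩
  have : Algebra.IsAlgebraic K L :=
    IntermediateField.isAlgebraic_adjoin (by rintro _ ⟨i, rfl⟩; exact hyint i)
  obtain ⟨σ, hσ⟩ := IntermediateField.exists_algHom_of_splits_of_aeval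
    (fun s => ⟨(Algebra.IsAlgebraic.isAlgebraic s).isIntegral, IsAlgClosed.splits _⟩)
    (x := y' i₀) (by rwa [IntermediateField.minpoly_eq])
  have hσc : ∀ n : ℕ, ∑ i, σ (c' i) * σ (y' i) ^ n = ∑ i, c i * y i ^ n := by
    intro n
    obtain ⟨a, ha⟩ := hc n
    have : ∑ i, c' i * y' i ^ n = algebraMap K L a := Subtype.ext (by simp [c', y', ha])
    simpa [← map_pow, ← map_mul, ← map_sum, ← ha] using congrArg σ this
  have hσy : ∀ i, σ (y' i) = z ↔ i = i₀ := fun i => by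
    rw [← hσ]
    exact (RingHom.injective (σ : L →+* Ω)).eq_iff.trans (Subtype.ext_iff.trans hy.eq_iff)
  have key := sum_fiber_eq_zero_of_forall_sum_mul_pow_eq_zero
    (w := Sum.elim y (fun i => σ (y' i))) (a := Sum.elim c (fun i => -σ (c' i)))
    (fun n => by simp [Fintype.sum_sum_type, hσc]) z
  simpa [sum_filter, Fintype.sum_sum_type, hσy, fun i => (hzy i).symm, c', Subtype.ext_iff]
    using key

theorem eq_zero_of_forall_sum_mul_pow_eq_intCast {x : ι → ℝ} (hinj : Function.Injective x)
    (hint : ∀ i, IsIntegral ℤ (x i))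
    (hconj : ∀ i, ∃ z : ℂ, aeval z (minpoly ℤ (x i)) = 0 ∧ ∀ j, z ≠ (x j : ℂ))
    {c : ι → ℝ} (hc : ∀ n : ℕ, ∃ m : ℤ, ∑ i, c i * x i ^ n = m) (i : ι) : c i = 0 := by
  obtain ⟨z, hz, hzx⟩ := hconj i
  have hxint : ∀ j, IsIntegral ℤ (x j : ℂ) := fun j => (hint j).algebraMap
  have hminpoly : minpoly ℚ (x i : ℂ) = (minpoly ℤ (x i)).map (algebraMap ℤ ℚ) := by
    rw [minpoly.isIntegrallyClosed_eq_field_fractions' ℚ (hxint i),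
      ← minpoly.algHom_eq (Complex.ofRealAm.restrictScalars ℤ) Complex.ofReal_injective]
    rfl
  have hmoments (n : ℕ) : ∑ j, (c j : ℂ) * (x j : ℂ) ^ n ∈ Set.range (algebraMap ℚ ℂ) := by
    obtain ⟨m, hm⟩ := hc n
    exact ⟨m, by simp [← Complex.ofReal_pow, ← Complex.ofReal_mul, ← Complex.ofReal_sum, hm]⟩
  exact_mod_cast eq_zero_of_forall_sum_mul_pow_mem_range (y := fun j => (x j : ℂ))
    (Complex.ofReal_injective.comp hinj) (fun j => (hxint j).tower_top) hmoments (i₀ := i)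
    (by rwa [hminpoly, aeval_map_algebraMap]) hzx

end PowerSums

/-- Let `x_1, …, x_r` be distinct real algebraic integers such that each of them has a
(complex) conjugate not in `{x_1, …, x_r}`. Then `{(Q(x_1), …, Q(x_r)) : Q ∈ ℤ[T]}` is
dense in `ℝ^r`. -/
theorem dense_int_poly_values (r : ℕ) (x : Fin r → ℝ)
    (hinj : Function.Injective x)
    (hint : ∀ i, IsIntegral ℤ (x i))
    (hconj : ∀ i, ∃ z : ℂ, Polynomial.aeval z (minpoly ℤ (x i)) = 0 ∧
      ∀ j, z ≠ (x j : ℂ)) :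
    Dense (Set.range fun Q : Polynomial ℤ => fun i => (Polynomial.aeval (x i) Q : ℝ)) := by
  by_contra hnd
  let ev : ℤ[X] →+ (Fin r → ℝ) := (AlgHom.pi fun i => aeval (x i)).toAddMonoidHom
  obtain ⟨φ, hφ0, hφ⟩ := ev.range.exists_dual_intValued_of_not_dense hnd
  set c : Fin r → ℝ := fun i => φ fun j => if i = j then 1 else 0
  have hφc : ∀ v, φ v = ∑ i, c i * v i := fun v => by
    simp [φ.pi_apply_eq_sum_univ v, c, mul_comm]
  have hmoments : ∀ n : ℕ, ∃ m : ℤ, ∑ i, c i * x i ^ n = m := fun n => by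
    obtain ⟨m, hm⟩ := hφ _ ⟨X ^ n, rfl⟩
    exact ⟨m, by simpa [hφc, ev] using hm⟩
  have hc := eq_zero_of_forall_sum_mul_pow_eq_intCast hinj hint hconj hmoments
  exact hφ0 (LinearMap.ext fun v => by simp [hφc, hc])
end

section
/- Let 0 < a < 2 and K = [−a, a]. Then every element x of J_0(K) is of the form x = 2·cos(2πj/k) for some integers j, k with gcd(j, k) = 1 and 1 ≤ k ≤ 2π/arccos(a/2); that is, J_0([−a,a]) ⊆ ⋃_{1 ≤ k ≤ 2π/arccos(a/2)} { 2cos(2πj/k) : gcd(j,k) = 1 }. -/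
/-!
Write `x = β + β⁻¹` with `β = exp (i arccos (x / 2))`. Then `β` is an algebraic integer, and
every conjugate `z` of `β` satisfies `z + z⁻¹ = y` for a conjugate `y` of `x`; since `y` is real
with `|y| ≤ a < 2`, `|z| = 1`. By Kronecker's theorem `β` is a primitive `k`-th root of unity
`exp (2πij/k)`, so `x = 2 cos (2πj/k)`. Finally `exp (2πi/k)` is also a conjugate of `β`, so
`2 cos (2π/k)` is a conjugate of `x`; it is at most `a`, which bounds `k`.
-/

open Polynomial Real

/-- The Fekete kernel `J(K)`. -/
def feketeKernel (K : Set ℝ) : Set ℝ :=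
  {x | x ∈ K ∧ ∀ P : Polynomial ℤ,
    supNormOn K (P.map (Int.castRingHom ℝ)) < 1 → Polynomial.aeval x P = 0}

/-- `J_0(K)`: elements of `J(K)` that are algebraic integers all of whose complex conjugates
are real and belong to `K`. -/
def feketeKernel0 (K : Set ℝ) : Set ℝ :=
  {α | α ∈ feketeKernel K ∧ IsIntegral ℤ α ∧
    ∀ z : ℂ, Polynomial.aeval z (minpoly ℤ α) = 0 → ∃ y ∈ K, (y : ℂ) = z}

open IntermediateField

theorem Complex.norm_eq_one_of_add_inv_eq_ofReal {z : ℂ} {y : ℝ} (hz : z ≠ 0) (hy : |y| < 2)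
    (h : z + z⁻¹ = y) : ‖z‖ = 1 := by
  have hq : z ^ 2 - y * z + 1 = 0 := by
    rw [← h]; field_simp; ring
  have hq' : starRingEnd ℂ z ^ 2 - y * starRingEnd ℂ z + 1 = 0 := by
    simpa using congrArg (starRingEnd ℂ) hq
  have hfac : (starRingEnd ℂ z - z) * (starRingEnd ℂ z + z - y) = 0 := by
    linear_combination hq' - hq
  rcases mul_eq_zero.mp hfac with hreal | hsum
  · obtain ⟨r, rfl⟩ := Complex.conj_eq_iff_real.mp (sub_eq_zero.mp hreal)
    have hr : r ^ 2 - y * r + 1 = 0 := by exact_mod_cast hq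
    nlinarith [sq_nonneg (2 * r - y), abs_lt.mp hy]
  · have h1 : z * starRingEnd ℂ z = 1 := by linear_combination z * hsum - hq
    rw [Complex.mul_conj, Complex.normSq_eq_norm_sq] at h1
    exact (pow_eq_one_iff_of_nonneg (norm_nonneg z) two_ne_zero).mp (by exact_mod_cast h1)

theorem IsIntegral.of_add_inv {R A : Type*} [CommRing R] [Field A] [Algebra R A] {β : A}
    (hβ : β ≠ 0) (h : IsIntegral R (β + β⁻¹)) : IsIntegral R β := by
  let c : integralClosure R A := ⟨β + β⁻¹, h⟩
  refine isIntegral_trans β ⟨X ^ 2 - C c * X + 1, by monicity!, ?_⟩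
  simp only [eval₂_add, eval₂_sub, eval₂_X_pow, eval₂_mul, eval₂_C, eval₂_X, eval₂_one,
    Subalgebra.algebraMap_apply, c]
  field_simp
  ring

theorem Complex.exp_mul_I_add_inv (θ : ℝ) :
    Complex.exp (θ * Complex.I) + (Complex.exp (θ * Complex.I))⁻¹ =
      ((2 * Real.cos θ : ℝ) : ℂ) := by
  push_cast
  rw [Complex.two_cos, neg_mul, Complex.exp_neg]

theorem natCast_le_two_pi_div_arccos {c : ℝ} (hc : c < 1) {k : ℕ} (hk : 0 < k)
    (h : Real.cos (2 * π / k) ≤ c) : (k : ℝ) ≤ 2 * π / arccos c := by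
  have hk2 : (2 : ℝ) ≤ k := by
    have : k ≠ 1 := by rintro rfl; rw [Nat.cast_one, div_one, cos_two_pi] at h; linarith
    exact_mod_cast (show 2 ≤ k by omega)
  have hkpos : (0 : ℝ) < k := by linarith
  have harc : arccos c ≤ 2 * π / k := by
    calc arccos c ≤ arccos (Real.cos (2 * π / k)) := arccos_le_arccos h
      _ = 2 * π / k := arccos_cos (by positivity)
          (by rw [div_le_iff₀ hkpos]; nlinarith [pi_pos])
  rw [le_div_iff₀ (arccos_pos.mpr hc)]
  calc (k : ℝ) * arccos c ≤ k * (2 * π / k) := by gcongr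
    _ = 2 * π := by field_simp

theorem aeval_add_inv_minpoly_add_inv {F E K : Type*} [Field F] [Field E] [Field K]
    [Algebra F E] [Algebra F K] {β : E} {z : K} (hβ : IsIntegral F β)
    (hz : aeval z (minpoly F β) = 0) :
    aeval (z + z⁻¹) (minpoly F (β + β⁻¹)) = 0 := by
  let σ : F⟮β⟯ →ₐ[F] K :=
    (algHomAdjoinIntegralEquiv F hβ).symm ⟨z, mem_aroots.mpr ⟨minpoly.ne_zero hβ, hz⟩⟩
  have hσ : σ (AdjoinSimple.gen F β) = z := algHomAdjoinIntegralEquiv_symm_apply_gen F hβ _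
  set γ := AdjoinSimple.gen F β
  have hγ : minpoly F (γ + γ⁻¹) = minpoly F (β + β⁻¹) := by
    rw [← minpoly.algebraMap_eq (algebraMap F⟮β⟯ E).injective, map_add, map_inv₀,
      AdjoinSimple.algebraMap_gen]
  rw [← hγ, ← hσ, ← map_inv₀, ← map_add]
  exact minpoly.aeval_algHom _ σ _

theorem exists_pow_eq_one_of_roots_minpoly_norm_eq_one {β : ℂ} (hβ : IsIntegral ℤ β)
    (h : ∀ z : ℂ, aeval z (minpoly ℚ β) = 0 → ‖z‖ = 1) : ∃ n, 0 < n ∧ β ^ n = 1 := by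
  have hβℚ : IsIntegral ℚ β := hβ.tower_top
  have : FiniteDimensional ℚ ℚ⟮β⟯ := adjoin.finiteDimensional hβℚ
  have : NumberField ℚ⟮β⟯ := ⟨⟩
  set γ := AdjoinSimple.gen ℚ β
  have hγβ : algebraMap ℚ⟮β⟯ ℂ γ = β := AdjoinSimple.algebraMap_gen ℚ β
  have hγ : IsIntegral ℤ γ := by
    rw [← isIntegral_algebraMap_iff (algebraMap ℚ⟮β⟯ ℂ).injective, hγβ]; exact hβ
  obtain ⟨n, hn, hγn⟩ := NumberField.Embeddings.pow_eq_one_of_norm_eq_one ℚ⟮β⟯ ℂ hγ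
    fun φ ↦ h _ (by rw [← minpoly_gen]; exact minpoly.aeval_algHom _ φ.toRatAlgHom γ)
  exact ⟨n, hn, by rw [← hγβ, ← map_pow, hγn, map_one]⟩

theorem aeval_minpoly_int_eq_zero {x : ℝ} (hx : IsIntegral ℤ x) {z : ℂ}
    (hz : aeval z (minpoly ℚ (x : ℂ)) = 0) : aeval z (minpoly ℤ x) = 0 := by
  rwa [← Complex.coe_algebraMap, minpoly.algebraMap_eq (algebraMap ℝ ℂ).injective,
    minpoly.isIntegrallyClosed_eq_field_fractions' ℚ hx, aeval_map_algebraMap] at hz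

theorem exists_isPrimitiveRoot_add_inv_eq_of_roots_minpoly_abs_lt_two {x : ℝ}
    (hx : IsIntegral ℤ x)
    (hconj : ∀ z : ℂ, aeval z (minpoly ℚ (x : ℂ)) = 0 → ∃ y : ℝ, |y| < 2 ∧ (y : ℂ) = z) :
    ∃ (β : ℂ) (k : ℕ), 0 < k ∧ IsPrimitiveRoot β k ∧ β + β⁻¹ = x := by
  obtain ⟨x', hx', hxx'⟩ := hconj x (minpoly.aeval ℚ _)
  obtain ⟨hx₁, hx₂⟩ := abs_lt.mp (Complex.ofReal_inj.mp hxx' ▸ hx')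
  set β : ℂ := Complex.exp (arccos (x / 2) * Complex.I)
  have hβ0 : β ≠ 0 := Complex.exp_ne_zero _
  have hβx : β + β⁻¹ = x := by
    rw [Complex.exp_mul_I_add_inv, cos_arccos (by linarith) (by linarith),
      mul_div_cancel₀ _ two_ne_zero]
  have hβ : IsIntegral ℤ β := by
    refine .of_add_inv hβ0 (hβx ▸ ?_)
    rwa [← Complex.coe_algebraMap, isIntegral_algebraMap_iff (algebraMap ℝ ℂ).injective]
  have hβℚ : IsIntegral ℚ β := hβ.tower_top
  obtain ⟨n, hn, hβn⟩ := exists_pow_eq_one_of_roots_minpoly_norm_eq_one hβ fun z hz ↦ by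
    have hz0 : z ≠ 0 := by
      rintro rfl
      exact minpoly.coeff_zero_ne_zero hβℚ hβ0 (by simpa [← coeff_zero_eq_aeval_zero'] using hz)
    obtain ⟨y, hy, hyz⟩ := hconj _ (hβx ▸ aeval_add_inv_minpoly_add_inv hβℚ hz)
    exact Complex.norm_eq_one_of_add_inv_eq_ofReal hz0 hy hyz.symm
  have hk : 0 < orderOf β := orderOf_pos_iff.mpr (isOfFinOrder_iff_pow_eq_one.mpr ⟨n, hn, hβn⟩)
  exact ⟨β, orderOf β, hk, IsPrimitiveRoot.orderOf β, hβx⟩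

theorem exists_eq_two_mul_cos_of_roots_minpoly_abs_lt_two {x : ℝ} (hx : IsIntegral ℤ x)
    (hconj : ∀ z : ℂ, aeval z (minpoly ℚ (x : ℂ)) = 0 → ∃ y : ℝ, |y| < 2 ∧ (y : ℂ) = z) :
    ∃ j k : ℕ, 0 < k ∧ j.Coprime k ∧ x = 2 * Real.cos (2 * π * j / k) ∧
      aeval ((2 * Real.cos (2 * π / k) : ℝ) : ℂ) (minpoly ℚ (x : ℂ)) = 0 := by
  obtain ⟨β, k, hk, hβ, hβx⟩ :=
    exists_isPrimitiveRoot_add_inv_eq_of_roots_minpoly_abs_lt_two hx hconj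
  obtain ⟨j, -, hjk, hβj⟩ := (Complex.isPrimitiveRoot_iff β k hk.ne').mp hβ
  refine ⟨j, k, hk, hjk, ?_, ?_⟩
  · rw [← hβj, show 2 * π * Complex.I * (j / k) = ((2 * π * j / k : ℝ) : ℂ) * Complex.I by
      push_cast; ring, Complex.exp_mul_I_add_inv] at hβx
    exact_mod_cast hβx.symm
  · have hζ : aeval (Complex.exp (((2 * π / k : ℝ) : ℂ) * Complex.I)) (minpoly ℚ β) = 0 := by
      rw [show ((2 * π / k : ℝ) : ℂ) * Complex.I = 2 * π * Complex.I / k by push_cast; ring,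
        ← cyclotomic_eq_minpoly_rat hβ hk, aeval_def, ← eval_map, map_cyclotomic]
      exact (Complex.isPrimitiveRoot_exp k hk.ne').isRoot_cyclotomic hk
    rw [← Complex.exp_mul_I_add_inv, ← hβx]
    exact aeval_add_inv_minpoly_add_inv (hβ.isIntegral hk).tower_top hζ

theorem feketeKernel0_Icc_subset_general (a : ℝ) (ha2 : a < 2)
    (x : ℝ) (hx : x ∈ feketeKernel0 (Set.Icc (-a) a)) :
    ∃ (j : ℤ) (k : ℕ), 1 ≤ k ∧ (k : ℝ) ≤ 2 * π / arccos (a / 2) ∧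
      Int.gcd j (k : ℤ) = 1 ∧ x = 2 * Real.cos (2 * π * (j : ℝ) / (k : ℝ)) := by
  obtain ⟨⟨-, -⟩, hxint, hconj⟩ := hx
  have hroots (z : ℂ) (hz : aeval z (minpoly ℚ (x : ℂ)) = 0) :
      ∃ y ∈ Set.Icc (-a) a, (y : ℂ) = z :=
    hconj z (aeval_minpoly_int_eq_zero hxint hz)
  obtain ⟨j, k, hk, hjk, rfl, hcos⟩ :=
    exists_eq_two_mul_cos_of_roots_minpoly_abs_lt_two hxint fun z hz ↦ by
      obtain ⟨y, hy, hyz⟩ := hroots z hz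
      exact ⟨y, abs_lt.mpr ⟨by linarith [hy.1], by linarith [hy.2]⟩, hyz⟩
  obtain ⟨y, ⟨-, hya⟩, hyk⟩ := hroots _ hcos
  have hcos_le : Real.cos (2 * π / k) ≤ a / 2 := by linarith [Complex.ofReal_inj.mp hyk]
  exact ⟨j, k, hk, natCast_le_two_pi_div_arccos (by linarith) hk hcos_le,
    by simpa [Int.gcd_natCast_natCast] using hjk, by push_cast; rfl⟩

/-- For `0 < a < 2`, every element of `J_0([-a,a])` is of the form `2 cos(2πj/k)` with
`gcd(j,k) = 1` and `1 ≤ k ≤ 2π / arccos(a/2)`. -/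
theorem feketeKernel0_Icc_subset (a : ℝ) (ha0 : 0 < a) (ha2 : a < 2)
    (x : ℝ) (hx : x ∈ feketeKernel0 (Set.Icc (-a) a)) :
    ∃ (j : ℤ) (k : ℕ), 1 ≤ k ∧ (k : ℝ) ≤ 2 * π / arccos (a / 2) ∧
      Int.gcd j (k : ℤ) = 1 ∧ x = 2 * Real.cos (2 * π * (j : ℝ) / (k : ℝ)) :=
  feketeKernel0_Icc_subset_general a ha2 x hx
end
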